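/- arXiv:2204.01895 — 5 statements merged into one kernel-verified Lean document; each statement's English description precedes it below -/
import Mathlib

section
/- Let M be a densely linearly ordered set without endpoints, equipped with the order topology, such that every subset of M definable in a given first-order structure on M is, near each point, a finite union of points and open intervals (local o-minimality), and suppose every definable subset of M has a supremum and infimum in M ∪ {±∞} (definable completeness). Then every definable subset of M with empty interior is closed and discrete. -/
open FirstOrder Set

namespace Paper

variable (L : FirstOrder.Language)

/-- A subset of `Mⁿ` definable with arbitrary parameters from `M`. -/
def Def (M : Type*) [L.Structure M] {n : ℕ} (s : Set (Fin n → M)) : Prop :=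
  Set.Definable (Set.univ : Set M) L s

/-- A subset of `M` definable with arbitrary parameters from `M`. -/
def Def1 (M : Type*) [L.Structure M] (s : Set M) : Prop :=
  Def L M {f : Fin 1 → M | f 0 ∈ s}

/-- A subset of `M × M` definable with arbitrary parameters from `M`. -/
def Def2 (M : Type*) [L.Structure M] (s : Set (M × M)) : Prop :=
  Def L M {f : Fin 2 → M | (f 0, f 1) ∈ s}

/-- A discrete subset of a topological space. -/
def IsDiscrete {X : Type*} [TopologicalSpace X] (s : Set X) : Prop :=
  ∀ x ∈ s, ∃ U : Set X, IsOpen U ∧ x ∈ U ∧ U ∩ s = {x}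

/-- An open interval (with possibly infinite endpoints). -/
def IsOInterval {M : Type*} [Preorder M] (s : Set M) : Prop :=
  (∃ a b : M, s = Set.Ioo a b) ∨ (∃ a, s = Set.Ioi a) ∨ (∃ b, s = Set.Iio b) ∨ s = Set.univ

/-- A finite union of points and open intervals. -/
def FinUnionPtsIntervals {M : Type*} [Preorder M] (s : Set M) : Prop :=
  ∃ (F : Finset M) (n : ℕ) (J : Fin n → Set M),
    (∀ i, IsOInterval (J i)) ∧ s = ↑F ∪ ⋃ i, J i

/-- Local o-minimality. -/
def LocallyOMinimal (M : Type*) [L.Structure M] [LinearOrder M] : Prop :=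
  ∀ s : Set M, Def1 L M s → ∀ a : M,
    ∃ I : Set M, IsOInterval I ∧ a ∈ I ∧ FinUnionPtsIntervals (s ∩ I)

/-- Definable completeness. -/
def DefinablyComplete (M : Type*) [L.Structure M] [LinearOrder M] : Prop :=
  ∀ s : Set M, Def1 L M s → s.Nonempty →
    (BddAbove s → ∃ a, IsLUB s a) ∧ (BddBelow s → ∃ a, IsGLB s a)

/-- A coordinate projection of `X ⊆ Mⁿ` to `M^d` has image with nonempty interior. -/
def HasDimWit {M : Type*} [TopologicalSpace M] {n : ℕ} (X : Set (Fin n → M)) (d : ℕ) : Prop :=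
  ∃ σ : Fin d ↪ Fin n, (interior ((fun x => x ∘ σ) '' X)).Nonempty

/-- The projection dimension of a subset of `Mⁿ`, with `projDim ∅ = ⊥ = -∞`. -/
noncomputable def projDim {M : Type*} [TopologicalSpace M] {n : ℕ}
    (X : Set (Fin n → M)) : WithBot ℕ∞ :=
  ⨆ d ∈ {d : ℕ | HasDimWit X d}, ((d : ℕ∞) : WithBot ℕ∞)

/-- The discrete closure of `A ⊆ M`. -/
def discl (M : Type*) [L.Structure M] [TopologicalSpace M] (A : Set M) : Set M :=
  {x | ∃ s : Set M, Set.Definable A L {f : Fin 1 → M | f 0 ∈ s} ∧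
    IsDiscrete s ∧ IsClosed s ∧ x ∈ s}


end Paper

open Paper

/-! Local o-minimality cuts `X` near each point into finitely many points and open intervals;
since `X` has empty interior there are no intervals, so `X` is locally finite, and a locally
finite subset of a T₁ space is closed and discrete. -/

section LocallyFinite

variable {α : Type*} [TopologicalSpace α] [T1Space α] {X : Set α}

theorem isClosed_of_forall_exists_isOpen_inter_finite
    (h : ∀ a, ∃ U, IsOpen U ∧ a ∈ U ∧ (U ∩ X).Finite) : IsClosed X := by
  refine isOpen_compl_iff.mp (isOpen_iff_forall_mem_open.mpr fun a ha => ?_)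
  obtain ⟨U, hU, haU, hfin⟩ := h a
  refine ⟨U \ (U ∩ X), fun x hx hxX => hx.2 ⟨hx.1, hxX⟩, hU.sdiff hfin.isClosed, haU,
    fun haUX => ha haUX.2⟩

theorem isDiscrete_of_forall_exists_isOpen_inter_finite
    (h : ∀ a, ∃ U, IsOpen U ∧ a ∈ U ∧ (U ∩ X).Finite) : Paper.IsDiscrete X := by
  intro a haX
  obtain ⟨U, hU, haU, hfin⟩ := h a
  refine ⟨U \ ((U ∩ X) \ {a}), hU.sdiff hfin.sdiff.isClosed, ⟨haU, fun ha => ha.2 rfl⟩, ?_⟩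
  ext x
  constructor
  · rintro ⟨⟨hxU, hxn⟩, hxX⟩
    by_contra hxa
    exact hxn ⟨⟨hxU, hxX⟩, hxa⟩
  · rintro rfl
    exact ⟨⟨haU, fun ha => ha.2 rfl⟩, haX⟩

end LocallyFinite

section OrderTopology

variable {M : Type*} [LinearOrder M] [TopologicalSpace M] [OrderTopology M]

theorem Paper.IsOInterval.isOpen {s : Set M} (h : IsOInterval s) : IsOpen s := by
  rcases h with ⟨a, b, rfl⟩ | ⟨a, rfl⟩ | ⟨b, rfl⟩ | rfl
  · exact isOpen_Ioo
  · exact isOpen_Ioi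
  · exact isOpen_Iio
  · exact isOpen_univ

theorem Paper.FinUnionPtsIntervals.finite_of_interior_eq_empty {s : Set M}
    (hs : FinUnionPtsIntervals s) (hint : interior s = ∅) : s.Finite := by
  obtain ⟨F, n, J, hJ, rfl⟩ := hs
  have hJ_empty : ∀ i, J i = ∅ := fun i =>
    subset_empty_iff.mp <| hint ▸
      interior_maximal ((subset_iUnion J i).trans subset_union_right) (hJ i).isOpen
  simp [hJ_empty]

theorem Paper.LocallyOMinimal.exists_isOpen_inter_finite {L : FirstOrder.Language}
    [L.Structure M] (hlo : LocallyOMinimal L M) {X : Set M} (hX : Def1 L M X)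
    (hint : interior X = ∅) (a : M) : ∃ U, IsOpen U ∧ a ∈ U ∧ (U ∩ X).Finite := by
  obtain ⟨I, hI, haI, hXI⟩ := hlo X hX a
  refine ⟨I, hI.isOpen, haI, inter_comm X I ▸ hXI.finite_of_interior_eq_empty ?_⟩
  exact subset_empty_iff.mp (hint ▸ interior_mono inter_subset_left)

end OrderTopology

theorem definable_empty_interior_closed_discrete_general
    {L : FirstOrder.Language} {M : Type*} [LinearOrder M] [L.Structure M]
    [TopologicalSpace M] [OrderTopology M]
    (hlo : LocallyOMinimal L M)
    (X : Set M) (hX : Def1 L M X) (hint : interior X = ∅) :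
    IsClosed X ∧ Paper.IsDiscrete X :=
  have hloc := hlo.exists_isOpen_inter_finite hX hint
  ⟨isClosed_of_forall_exists_isOpen_inter_finite hloc,
    isDiscrete_of_forall_exists_isOpen_inter_finite hloc⟩

/-- In a definably complete locally o-minimal structure, any definable subset of `M`
having an empty interior is closed and discrete. -/
theorem definable_empty_interior_closed_discrete
    {L : FirstOrder.Language} {M : Type*} [L.IsOrdered] [LinearOrder M] [L.Structure M]
    [L.OrderedStructure M] [DenselyOrdered M] [NoMaxOrder M] [NoMinOrder M]
    [TopologicalSpace M] [OrderTopology M]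
    (hlo : LocallyOMinimal L M) (hdc : DefinablyComplete L M)
    (X : Set M) (hX : Def1 L M X) (hint : interior X = ∅) :
    IsClosed X ∧ Paper.IsDiscrete X :=
  definable_empty_interior_closed_discrete_general hlo X hX hint
end

section
/- Let M be a dense linear order without endpoints with its order topology, and let X ⊆ M be a set such that for every a ∈ M there is an open interval I containing a with X ∩ I a finite union of points and open intervals. If X has empty interior, then every point of X is isolated in X. -/
open FirstOrder Set

open Paper

/-- In a dense linear order without endpoints, if `X` is locally a finite union of points
and open intervals at every point and has empty interior, then every point of `X` is
isolated in `X`. -/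
theorem isolated_of_locally_finite_union_empty_interior
    {M : Type*} [LinearOrder M] [DenselyOrdered M] [NoMaxOrder M] [NoMinOrder M]
    [TopologicalSpace M] [OrderTopology M]
    (X : Set M)
    (hloc : ∀ a : M, ∃ I : Set M, IsOInterval I ∧ a ∈ I ∧ FinUnionPtsIntervals (X ∩ I))
    (hint : interior X = ∅) :
    ∀ x ∈ X, ∃ I : Set M, IsOInterval I ∧ x ∈ I ∧ X ∩ I = {x} := by
  classical
  intro x hx
  obtain ⟨I, hI, hxI, F, n, J, hJ, hXI⟩ := hloc x
  -- each open interval in the decomposition is empty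
  have hJempty : ∀ i, J i = ∅ := by
    intro i
    have hopen : IsOpen (J i) := by
      rcases hJ i with ⟨a, b, h⟩ | ⟨a, h⟩ | ⟨b, h⟩ | h <;> rw [h]
      · exact isOpen_Ioo
      · exact isOpen_Ioi
      · exact isOpen_Iio
      · exact isOpen_univ
    have hsub : J i ⊆ X := fun y hy => by
      have : y ∈ X ∩ I := hXI ▸ Or.inr (mem_iUnion.2 ⟨i, hy⟩)
      exact this.1
    have : J i ⊆ interior X := interior_maximal hsub hopen
    rw [hint] at this
    exact subset_empty_iff.1 this
  have hXIF : X ∩ I = ↑F := by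
    rw [hXI]
    have : ⋃ i, J i = (∅ : Set M) := by simp [hJempty]
    rw [this, union_empty]
  have hxF : x ∈ F := by
    have : x ∈ X ∩ I := ⟨hx, hxI⟩
    rwa [hXIF] at this
  -- find an Ioo around x inside I
  obtain ⟨l, u, hlx, hxu, hsub⟩ : ∃ l u, l < x ∧ x < u ∧ Set.Ioo l u ⊆ I := by
    rcases hI with ⟨a, b, rfl⟩ | ⟨a, rfl⟩ | ⟨b, rfl⟩ | rfl
    · exact ⟨a, b, hxI.1, hxI.2, subset_rfl⟩
    · obtain ⟨u, hu⟩ := exists_gt x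
      exact ⟨a, u, hxI, hu, fun y hy => hy.1⟩
    · obtain ⟨l, hl⟩ := exists_lt x
      exact ⟨l, b, hl, hxI, fun y hy => hy.2⟩
    · obtain ⟨l, hl⟩ := exists_lt x
      obtain ⟨u, hu⟩ := exists_gt x
      exact ⟨l, u, hl, hu, fun _ _ => mem_univ _⟩
  -- shrink to avoid other points of F
  set S : Finset M := insert l (F.filter (fun y => y < x)) with hS
  set T : Finset M := insert u (F.filter (fun y => x < y)) with hT
  have hSne : S.Nonempty := ⟨l, Finset.mem_insert_self _ _⟩
  have hTne : T.Nonempty := ⟨u, Finset.mem_insert_self _ _⟩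
  set l' := S.max' hSne with hl'
  set u' := T.min' hTne with hu'
  have hl'x : l' < x := by
    rw [hl', Finset.max'_lt_iff]
    intro y hy
    rcases Finset.mem_insert.1 hy with rfl | hy
    · exact hlx
    · exact (Finset.mem_filter.1 hy).2
  have hxu' : x < u' := by
    rw [hu', Finset.lt_min'_iff]
    intro y hy
    rcases Finset.mem_insert.1 hy with rfl | hy
    · exact hxu
    · exact (Finset.mem_filter.1 hy).2
  have hll' : l ≤ l' := Finset.le_max' S l (Finset.mem_insert_self _ _)
  have hu'u : u' ≤ u := Finset.min'_le T u (Finset.mem_insert_self _ _)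
  refine ⟨Set.Ioo l' u', Or.inl ⟨l', u', rfl⟩, ⟨hl'x, hxu'⟩, ?_⟩
  apply Subset.antisymm
  · rintro y ⟨hyX, hyl, hyu⟩
    have hyI : y ∈ I := hsub ⟨lt_of_le_of_lt hll' hyl, lt_of_lt_of_le hyu hu'u⟩
    have hyF : y ∈ F := by
      have : y ∈ X ∩ I := ⟨hyX, hyI⟩
      rwa [hXIF] at this
    by_contra hne
    rcases lt_or_gt_of_ne (fun h : y = x => hne (by rw [h]; rfl)) with hlt | hgt
    · have : y ≤ l' := Finset.le_max' S y
        (Finset.mem_insert_of_mem (Finset.mem_filter.2 ⟨hyF, hlt⟩))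
      exact absurd hyl (not_lt.2 this)
    · have : u' ≤ y := Finset.min'_le T y
        (Finset.mem_insert_of_mem (Finset.mem_filter.2 ⟨hyF, hgt⟩))
      exact absurd hyu (not_lt.2 this)
  · rintro y (rfl : y = x)
    exact ⟨hx, hl'x, hxu'⟩
end

section
/- Let M be a dense linear order without endpoints with its order topology, and let X ⊆ M be a set such that for every a ∈ M there is an open interval I containing a with X ∩ I a finite union of points and open intervals. If X has empty interior, then X is closed in M. -/
open FirstOrder Set

open Paper

/-- In a dense linear order without endpoints, if `X` is locally a finite union of points
and open intervals at every point and has empty interior, then `X` is closed. -/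
theorem closed_of_locally_finite_union_empty_interior
    {M : Type*} [LinearOrder M] [DenselyOrdered M] [NoMaxOrder M] [NoMinOrder M]
    [TopologicalSpace M] [OrderTopology M]
    (X : Set M)
    (hloc : ∀ a : M, ∃ I : Set M, IsOInterval I ∧ a ∈ I ∧ FinUnionPtsIntervals (X ∩ I))
    (hint : interior X = ∅) :
    IsClosed X := by
  have hopen : ∀ s : Set M, IsOInterval s → IsOpen s := by
    rintro s (⟨a, b, rfl⟩ | ⟨a, rfl⟩ | ⟨b, rfl⟩ | rfl)
    exacts [isOpen_Ioo, isOpen_Ioi, isOpen_Iio, isOpen_univ]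
  rw [← isOpen_compl_iff, isOpen_iff_mem_nhds]
  intro a ha
  obtain ⟨I, hI, haI, F, n, J, hJ, hXI⟩ := hloc a
  have hJempty : ∀ i, J i = ∅ := by
    intro i
    have hsub : J i ⊆ interior X := by
      apply interior_maximal _ (hopen _ (hJ i))
      intro x hx
      have : x ∈ X ∩ I := by rw [hXI]; exact Or.inr (mem_iUnion.2 ⟨i, hx⟩)
      exact this.1
    rw [hint] at hsub
    exact subset_empty_iff.mp hsub
  have hXIF : X ∩ I = ↑F := by
    rw [hXI]
    simp [hJempty]
  have haF : a ∉ (F : Set M) := by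
    intro h
    exact ha (hXIF ▸ h : a ∈ X ∩ I).1
  rw [mem_nhds_iff]
  refine ⟨I \ ↑F, ?_, (hopen I hI).sdiff F.finite_toSet.isClosed, haI, haF⟩
  intro x hx hxX
  exact hx.2 (hXIF ▸ ⟨hxX, hx.1⟩)
end

section
/- Let M be a definably complete locally o-minimal structure with universe M. Let T ⊆ M be a definable set and b ∈ T a point such that no open interval containing b is contained in T. Then b is either an isolated point of T or an endpoint of a maximal open interval contained in T; consequently b belongs to a definable (over the same parameters as T) subset of M that is discrete and closed. -/
open FirstOrder Set

open Paper

/-!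
Local o-minimality makes a definable set `T` one-sidedly constant near every point: just to
the right of `x`, either all points lie in `T` or none do, and likewise on the left. If `T`
fills a left neighbourhood of `b`, definable completeness provides the supremum `c` of
`(-∞, b) \ T`, and `(c, b)` (or `(-∞, b)` if there is no such point) is a maximal open interval
in `T`, maximal because neither `c` nor `b` is interior to `T`; symmetrically on the right. If
neither side meets `T`, then `b` is isolated. For the second part take `S = frontier T`: it is
closed and definable over the parameters of `T`, one-sided constancy of `T` gives it empty
interior, and one-sided constancy of `S` itself then isolates each of its points.
-/

open Filter Topology FirstOrder.Language

namespace Paper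

section Order

variable {M : Type*} [LinearOrder M]

lemma IsOInterval.ordConnected {s : Set M} (h : IsOInterval s) : s.OrdConnected := by
  rcases h with ⟨a, b, rfl⟩ | ⟨a, rfl⟩ | ⟨b, rfl⟩ | rfl <;> infer_instance

lemma eventuallyConst_iUnion {α ι : Type*} [Finite ι] {l : Filter α} {s : ι → Set α}
    (h : ∀ i, EventuallyConst (s i) l) : EventuallyConst (⋃ i, s i) l := by
  simp only [eventuallyConst_set, mem_iUnion, not_exists] at h ⊢
  by_cases hin : ∃ i, ∀ᶠ x in l, x ∈ s i
  · obtain ⟨i, hi⟩ := hin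
    exact Or.inl (hi.mono fun x hx => ⟨i, hx⟩)
  · simp only [not_exists] at hin
    exact Or.inr (eventually_all.2 fun i => (h i).resolve_left (hin i))

lemma FinUnionPtsIntervals.eventuallyConst {l : Filter M}
    (hl : ∀ s : Set M, s.OrdConnected → EventuallyConst s l) {s : Set M}
    (hs : FinUnionPtsIntervals s) : EventuallyConst s l := by
  obtain ⟨F, n, J, hJ, rfl⟩ := hs
  rw [← iUnion_of_singleton_coe (F : Set M)]
  exact (eventuallyConst_iUnion fun a => hl _ ordConnected_singleton).comp₂ (· ∨ ·)
    (eventuallyConst_iUnion fun i => hl _ (hJ i).ordConnected)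

variable [TopologicalSpace M] [OrderTopology M]

lemma IsOInterval.isOpen_s6 {s : Set M} (h : IsOInterval s) : IsOpen s := by
  rcases h with ⟨a, b, rfl⟩ | ⟨a, rfl⟩ | ⟨b, rfl⟩ | rfl
  exacts [isOpen_Ioo, isOpen_Ioi, isOpen_Iio, isOpen_univ]

lemma _root_.Set.OrdConnected.eventuallyConst_nhdsGT [NoMaxOrder M] {s : Set M}
    (hs : s.OrdConnected) (x : M) : EventuallyConst s (𝓝[>] x) := by
  rw [eventuallyConst_set]
  by_cases hout : ∀ᶠ y in 𝓝[>] x, y ∉ s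
  · exact Or.inr hout
  have hfreq : ∃ᶠ y in 𝓝[>] x, y ∈ s := by simpa [not_eventually] using hout
  obtain ⟨z, hzs, hxz⟩ := (hfreq.and_eventually self_mem_nhdsWithin).exists
  -- every `y ∈ (x, z)` lies between `z` and a point of `s` in `(x, y)`
  refine Or.inl ?_
  filter_upwards [Ioo_mem_nhdsGT hxz] with y hy
  obtain ⟨w, hws, hxw, hwy⟩ := (hfreq.and_eventually (Ioo_mem_nhdsGT hy.1)).exists
  exact hs.out hws hzs ⟨hwy.le, hy.2.le⟩

lemma _root_.Set.OrdConnected.eventuallyConst_nhdsLT [NoMinOrder M] {s : Set M}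
    (hs : s.OrdConnected) (x : M) : EventuallyConst s (𝓝[<] x) :=
  hs.dual.eventuallyConst_nhdsGT (OrderDual.toDual x)

lemma eventually_mem_interior_nhdsGT {s : Set M} {x : M} (h : s ∈ 𝓝[>] x) :
    ∀ᶠ y in 𝓝[>] x, y ∈ interior s := by
  filter_upwards [eventually_eventually_nhdsWithin.2 h, self_mem_nhdsWithin] with y hy hxy
  rwa [mem_interior_iff_mem_nhds, ← isOpen_Ioi.nhdsWithin_eq hxy]

lemma exists_isOInterval_inter_eq_singleton [NoMaxOrder M] [NoMinOrder M] {T : Set M} {b : M}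
    (hb : b ∈ T) (h : ∀ᶠ y in 𝓝[≠] b, y ∉ T) : ∃ I, IsOInterval I ∧ b ∈ I ∧ I ∩ T = {b} := by
  obtain ⟨U, hU, hUT⟩ := mem_nhdsWithin_iff_exists_mem_nhds_inter.1 h
  obtain ⟨l, u, hbI, hIU⟩ := mem_nhds_iff_exists_Ioo_subset.1 hU
  refine ⟨Ioo l u, Or.inl ⟨l, u, rfl⟩, hbI, Subset.antisymm (fun y ⟨hyI, hyT⟩ => ?_)
    (singleton_subset_iff.2 ⟨hbI, hb⟩)⟩
  by_contra hyb
  exact hUT ⟨hIU hyI, hyb⟩ hyT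

variable [DenselyOrdered M]

lemma eventually_notMem_nhdsGT_of_interior_eq_empty [NoMaxOrder M] {s : Set M} {x : M}
    (hs : EventuallyConst s (𝓝[>] x)) (hint : interior s = ∅) : ∀ᶠ y in 𝓝[>] x, y ∉ s := by
  refine (eventuallyConst_set.1 hs).resolve_left fun h => ?_
  obtain ⟨y, hy⟩ := (eventually_mem_interior_nhdsGT (s := s) h).exists
  rwa [hint] at hy

lemma eventually_notMem_nhdsLT_of_interior_eq_empty [NoMinOrder M] {s : Set M} {x : M}
    (hs : EventuallyConst s (𝓝[<] x)) (hint : interior s = ∅) : ∀ᶠ y in 𝓝[<] x, y ∉ s :=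
  eventually_notMem_nhdsGT_of_interior_eq_empty (M := Mᵒᵈ) hs hint

end Order

section LocallyOMinimal

variable {L : FirstOrder.Language} {M : Type*} [L.Structure M] [LinearOrder M]
  [TopologicalSpace M] [OrderTopology M]

lemma LocallyOMinimal.eventuallyConst (hlo : LocallyOMinimal L M) {T : Set M} (hT : Def1 L M T)
    {x : M} {l : Filter M} (hlx : l ≤ 𝓝 x)
    (hl : ∀ s : Set M, s.OrdConnected → EventuallyConst s l) : EventuallyConst T l := by
  obtain ⟨I, hI, hxI, hfin⟩ := hlo T hT x
  refine (hfin.eventuallyConst hl).congr ?_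
  filter_upwards [hlx (hI.isOpen_s6.mem_nhds hxI)] with y hy
  exact propext (and_iff_left hy)

lemma LocallyOMinimal.eventuallyConst_nhdsGT [NoMaxOrder M] (hlo : LocallyOMinimal L M)
    {T : Set M} (hT : Def1 L M T) (x : M) : EventuallyConst T (𝓝[>] x) :=
  hlo.eventuallyConst hT nhdsWithin_le_nhds fun _ hs => hs.eventuallyConst_nhdsGT x

lemma LocallyOMinimal.eventuallyConst_nhdsLT [NoMinOrder M] (hlo : LocallyOMinimal L M)
    {T : Set M} (hT : Def1 L M T) (x : M) : EventuallyConst T (𝓝[<] x) :=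
  hlo.eventuallyConst hT nhdsWithin_le_nhds fun _ hs => hs.eventuallyConst_nhdsLT x

variable [DenselyOrdered M] [NoMaxOrder M]

lemma LocallyOMinimal.interior_frontier_eq_empty (hlo : LocallyOMinimal L M) {T : Set M}
    (hT : Def1 L M T) : interior (frontier T) = ∅ := by
  refine eq_empty_of_forall_notMem fun x hx => ?_
  have hnear : ∀ᶠ y in 𝓝[>] x, y ∈ frontier T :=
    nhdsWithin_le_nhds (mem_interior_iff_mem_nhds.1 hx)
  have hfar : ∀ᶠ y in 𝓝[>] x, y ∉ frontier T := by
    rcases eventuallyConst_set.1 (hlo.eventuallyConst_nhdsGT hT x) with h | h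
    · exact (eventually_mem_interior_nhdsGT h).mono fun y hy hyT => hyT.2 hy
    · refine (eventually_mem_interior_nhdsGT (s := Tᶜ) h).mono fun y hy hyT => ?_
      rw [interior_compl] at hy
      exact hy hyT.1
  obtain ⟨y, hy, hy'⟩ := (hnear.and hfar).exists
  exact hy' hy

lemma LocallyOMinimal.isDiscrete [NoMinOrder M] (hlo : LocallyOMinimal L M) {S : Set M}
    (hS : Def1 L M S) (hint : interior S = ∅) : IsDiscrete S := by
  intro x hx
  have hleft :=
    eventually_notMem_nhdsLT_of_interior_eq_empty (hlo.eventuallyConst_nhdsLT hS x) hint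
  have hright :=
    eventually_notMem_nhdsGT_of_interior_eq_empty (hlo.eventuallyConst_nhdsGT hS x) hint
  obtain ⟨I, hI, hxI, hIS⟩ := exists_isOInterval_inter_eq_singleton hx
    (nhdsLT_sup_nhdsGT x ▸ eventually_sup.2 ⟨hleft, hright⟩)
  exact ⟨I, hI.isOpen_s6, hxI, hIS⟩

end LocallyOMinimal

section Definability

variable {L : FirstOrder.Language} {M : Type*} [L.Structure M]

lemma definable₁_fiber {S : Set (Fin 2 → M)} (hS : (univ : Set M).Definable L S) (b : M) :
    (univ : Set M).Definable₁ L {x | ![x, b] ∈ S} := by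
  refine hS.preimage_map fun i => ?_
  fin_cases i
  · exact DefinableFun.proj L
  · exact L.definableFun_const _ (mem_univ b)

variable [L.IsOrdered] [LinearOrder M] [L.OrderedStructure M] {A : Set M}

lemma definable_lt {α : Type*} (A : Set M) (i j : α) : A.Definable L {v : α → M | v i < v j} := by
  refine Set.Definable.mono ?_ (empty_subset A)
  rw [empty_definable_iff]
  exact ⟨Term.lt (Term.var (Sum.inl i)) (Term.var (Sum.inl j)), by
    ext; simp [Formula.Realize, Term.realize_lt]⟩

lemma definable_Ioo_subset {α : Type*} {T : Set M} (hT : A.Definable₁ L T) (i j : α) :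
    A.Definable L {v : α → M | Ioo (v i) (v j) ⊆ T} := by
  let y : α ⊕ Fin 1 := .inr 0
  have h := (definable_lt A (.inl i) y).himp
    ((definable_lt A y (.inl j)).himp (hT.preimage_comp fun _ => y))
  convert h.forall_of_finite using 1
  ext v
  simp [y, subset_def, Fin.forall_fin_succ_pi]

lemma definable₁_interior [TopologicalSpace M] [OrderTopology M] [NoMaxOrder M] [NoMinOrder M]
    {T : Set M} (hT : A.Definable₁ L T) : A.Definable₁ L (interior T) := by
  have h : A.Definable L {w : Fin 1 ⊕ Fin 2 → M | w (.inr 0) < w (.inl 0) ∧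
      w (.inl 0) < w (.inr 1) ∧ Ioo (w (.inr 0)) (w (.inr 1)) ⊆ T} :=
    (definable_lt A _ _).inter ((definable_lt A _ _).inter (definable_Ioo_subset hT _ _))
  unfold Set.Definable₁
  convert h.exists_of_finite using 1
  ext v
  simp [mem_interior_iff_mem_nhds, mem_nhds_iff_exists_Ioo_subset, Fin.exists_fin_succ_pi,
    and_assoc]

lemma definable₁_frontier [TopologicalSpace M] [OrderTopology M] [NoMaxOrder M] [NoMinOrder M]
    {T : Set M} (hT : A.Definable₁ L T) : A.Definable₁ L (frontier T) := by
  rw [frontier, closure_eq_compl_interior_compl]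
  exact (definable₁_interior (T := Tᶜ) hT.compl).compl.sdiff (definable₁_interior hT)

end Definability

section MaximalInterval

variable {M : Type*} [LinearOrder M] [TopologicalSpace M] [OrderTopology M] {T : Set M}

lemma maximal_of_forall_notMem {I : Set M} (hI : IsOInterval I) (hIT : I ⊆ T)
    (hsep : ∀ x ∉ I, ∃ e ∉ interior T, ∃ y ∈ I, e ∈ uIcc x y) :
    Maximal (fun J => IsOInterval J ∧ J ⊆ T) I := by
  refine ⟨⟨hI, hIT⟩, fun J ⟨hJ, hJT⟩ hIJ x hxJ => ?_⟩
  by_contra hxI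
  obtain ⟨e, he, y, hyI, hey⟩ := hsep x hxI
  exact he (interior_maximal hJT hJ.isOpen_s6 (hJ.ordConnected.uIcc_subset hxJ (hIJ hyI) hey))

lemma maximal_Ioo [DenselyOrdered M] {c b : M} (hcb : c < b) (hc : c ∉ interior T)
    (hb : b ∉ interior T) (h : Ioo c b ⊆ T) :
    Maximal (fun J => IsOInterval J ∧ J ⊆ T) (Ioo c b) := by
  obtain ⟨y, hy⟩ := nonempty_Ioo.2 hcb
  refine maximal_of_forall_notMem (Or.inl ⟨c, b, rfl⟩) h fun x hx => ?_
  rcases le_or_gt x c with hxc | hcx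
  · exact ⟨c, hc, y, hy, mem_uIcc.2 (Or.inl ⟨hxc, hy.1.le⟩)⟩
  · exact ⟨b, hb, y, hy, mem_uIcc.2 (Or.inr ⟨hy.2.le, not_lt.1 fun hxb => hx ⟨hcx, hxb⟩⟩)⟩

lemma maximal_Iio [NoMinOrder M] {b : M} (hb : b ∉ interior T) (h : Iio b ⊆ T) :
    Maximal (fun J => IsOInterval J ∧ J ⊆ T) (Iio b) := by
  obtain ⟨y, hy⟩ := exists_lt b
  exact maximal_of_forall_notMem (Or.inr (Or.inr (Or.inl ⟨b, rfl⟩))) h fun x hx =>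
    ⟨b, hb, y, hy, mem_uIcc.2 (Or.inr ⟨hy.le, not_lt.1 hx⟩)⟩

lemma maximal_Ioi [NoMaxOrder M] {c : M} (hc : c ∉ interior T) (h : Ioi c ⊆ T) :
    Maximal (fun J => IsOInterval J ∧ J ⊆ T) (Ioi c) := by
  obtain ⟨y, hy⟩ := exists_gt c
  exact maximal_of_forall_notMem (Or.inr (Or.inl ⟨c, rfl⟩)) h fun x hx =>
    ⟨c, hc, y, hy, mem_uIcc.2 (Or.inl ⟨not_lt.1 hx, hy.le⟩)⟩

variable [DenselyOrdered M]

lemma exists_maximal_isLUB [NoMinOrder M] {b : M} (hb : b ∉ interior T) (hleft : T ∈ 𝓝[<] b)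
    (hsup : (Iio b \ T).Nonempty → ∃ c, IsLUB (Iio b \ T) c) :
    ∃ I, Maximal (fun J => IsOInterval J ∧ J ⊆ T) I ∧ IsLUB I b := by
  rcases (Iio b \ T).eq_empty_or_nonempty with hD | hD
  · exact ⟨Iio b, maximal_Iio hb (sdiff_eq_empty.1 hD), isLUB_Iio⟩
  obtain ⟨c, hc⟩ := hsup hD
  obtain ⟨a, hab, haT⟩ := mem_nhdsLT_iff_exists_Ioo_subset.1 hleft
  have hcb : c < b := (hc.2 fun y hy => not_lt.1 fun hay => hy.2 (haT ⟨hay, hy.1⟩)).trans_lt hab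
  have hcT : Ioo c b ⊆ T := fun y hy => by_contra fun hyT => (hc.1 ⟨hy.2, hyT⟩).not_gt hy.1
  have hc_int : c ∉ interior T := by
    rw [← mem_compl_iff, ← closure_compl]
    exact closure_mono (fun y hy => hy.2) (hc.mem_closure hD)
  exact ⟨Ioo c b, maximal_Ioo hcb hc_int hb hcT, isLUB_Ioo hcb⟩

lemma exists_maximal_isGLB [NoMaxOrder M] {b : M} (hb : b ∉ interior T) (hright : T ∈ 𝓝[>] b)
    (hinf : (Ioi b \ T).Nonempty → ∃ c, IsGLB (Ioi b \ T) c) :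
    ∃ I, Maximal (fun J => IsOInterval J ∧ J ⊆ T) I ∧ IsGLB I b := by
  rcases (Ioi b \ T).eq_empty_or_nonempty with hD | hD
  · exact ⟨Ioi b, maximal_Ioi hb (sdiff_eq_empty.1 hD), isGLB_Ioi⟩
  obtain ⟨c, hc⟩ := hinf hD
  obtain ⟨a, hba, haT⟩ := mem_nhdsGT_iff_exists_Ioo_subset.1 hright
  have hbc : b < c := hba.trans_le (hc.2 fun y hy => not_lt.1 fun hya => hy.2 (haT ⟨hy.1, hya⟩))
  have hcT : Ioo b c ⊆ T := fun y hy => by_contra fun hyT => (hc.1 ⟨hy.1, hyT⟩).not_gt hy.2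
  have hc_int : c ∉ interior T := by
    rw [← mem_compl_iff, ← closure_compl]
    exact closure_mono (fun y hy => hy.2) (hc.mem_closure hD)
  exact ⟨Ioo b c, maximal_Ioo hbc hb hc_int hcT, isGLB_Ioo hbc⟩

end MaximalInterval

end Paper

/-- In a definably complete locally o-minimal structure, if `T` is a definable set (over a
parameter set `A`) and `b ∈ T` is a point such that no open interval containing `b` is
contained in `T`, then `b` is either an isolated point of `T` or an endpoint of a maximal
open interval contained in `T`; consequently `b` belongs to an `A`-definable discrete
closed subset of `M`. -/
theorem isolated_or_endpoint_and_mem_discrete_closed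
    {L : FirstOrder.Language} {M : Type*} [L.IsOrdered] [LinearOrder M] [L.Structure M]
    [L.OrderedStructure M] [DenselyOrdered M] [NoMaxOrder M] [NoMinOrder M]
    [TopologicalSpace M] [OrderTopology M]
    (hlo : LocallyOMinimal L M) (hdc : DefinablyComplete L M)
    (A : Set M) (T : Set M) (hT : Set.Definable A L {f : Fin 1 → M | f 0 ∈ T})
    (b : M) (hb : b ∈ T)
    (hnoint : ¬ ∃ I : Set M, IsOInterval I ∧ b ∈ I ∧ I ⊆ T) :
    ((∃ I : Set M, IsOInterval I ∧ b ∈ I ∧ I ∩ T = {b}) ∨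
      (∃ I : Set M, IsOInterval I ∧ I ⊆ T ∧
        (∀ J : Set M, IsOInterval J → I ⊆ J → J ⊆ T → J = I) ∧
        (IsLUB I b ∨ IsGLB I b))) ∧
    ∃ S : Set M, Set.Definable A L {f : Fin 1 → M | f 0 ∈ S} ∧
      Paper.IsDiscrete S ∧ IsClosed S ∧ b ∈ S := by
  have hTdef : Def1 L M T := hT.mono (subset_univ A)
  have hb_int : b ∉ interior T := fun h => hnoint <| by
    obtain ⟨l, u, hbI, hIT⟩ := mem_nhds_iff_exists_Ioo_subset.1 (mem_interior_iff_mem_nhds.1 h)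
    exact ⟨Ioo l u, Or.inl ⟨l, u, rfl⟩, hbI, hIT⟩
  have hS : Set.Definable A L {f : Fin 1 → M | f 0 ∈ frontier T} := definable₁_frontier hT
  refine ⟨?_, frontier T, hS,
    hlo.isDiscrete (hS.mono (subset_univ A)) (hlo.interior_frontier_eq_empty hTdef),
    isClosed_frontier, subset_closure hb, hb_int⟩
  rcases eventuallyConst_set.1 (hlo.eventuallyConst_nhdsLT hTdef b) with hleft | hleft
  · obtain ⟨I, hI, hIb⟩ := exists_maximal_isLUB hb_int hleft fun hD =>
      (hdc (Iio b \ T) ((definable₁_fiber (definable_lt univ 0 1) b).sdiff hTdef) hD).1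
        ⟨b, fun y hy => hy.1.le⟩
    exact Or.inr ⟨I, hI.1.1, hI.1.2, fun J hJ hIJ hJT => (hI.eq_of_subset ⟨hJ, hJT⟩ hIJ).symm,
      Or.inl hIb⟩
  rcases eventuallyConst_set.1 (hlo.eventuallyConst_nhdsGT hTdef b) with hright | hright
  · obtain ⟨I, hI, hIb⟩ := exists_maximal_isGLB hb_int hright fun hD =>
      (hdc (Ioi b \ T) ((definable₁_fiber (definable_lt univ 1 0) b).sdiff hTdef) hD).2
        ⟨b, fun y hy => hy.1.le⟩
    exact Or.inr ⟨I, hI.1.1, hI.1.2, fun J hJ hIJ hJT => (hI.eq_of_subset ⟨hJ, hJT⟩ hIJ).symm,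
      Or.inr hIb⟩
  exact Or.inl (exists_isOInterval_inter_eq_singleton hb
    (nhdsLT_sup_nhdsGT b ▸ eventually_sup.2 ⟨hleft, hright⟩))
end

section
/- Let M be a definably complete locally o-minimal structure and N an elementary extension. If a ∈ M and b ∈ N satisfy a < b and b < t for every t ∈ M with t > a, then b does not lie in the discrete closure of M computed in N; that is, b belongs to no N-definable-with-parameters-from-M discrete closed subset of N. -/
open FirstOrder Set

/-!
Let `s ⊆ N` be discrete and definable over `M`. Its trace `ι ⁻¹' s` on `M` is definable in `M`,
so by local o-minimality it either contains or misses an interval `(a, c)` with `c > a`. By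
elementarity `s` then contains, respectively misses, `(ι a, ι c)`, which contains `b`. In the
first case `s` contains an open interval of the dense order `N`, which is impossible for a
discrete set; in the second `b ∉ s`.
-/

open FirstOrder.Language Filter Topology

namespace Filter

theorem mem_or_compl_mem_union {β : Type*} {f : Filter β} {s t : Set β}
    (hs : s ∈ f ∨ sᶜ ∈ f) (ht : t ∈ f ∨ tᶜ ∈ f) : s ∪ t ∈ f ∨ (s ∪ t)ᶜ ∈ f := by
  rcases hs with hs | hs
  · exact .inl (mem_of_superset hs subset_union_left)
  rcases ht with ht | ht
  · exact .inl (mem_of_superset ht subset_union_right)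
  · exact .inr (compl_union s t ▸ inter_mem hs ht)

theorem mem_or_compl_mem_iUnion {β ι : Type*} [Finite ι] {f : Filter β} {s : ι → Set β}
    (hs : ∀ i, s i ∈ f ∨ (s i)ᶜ ∈ f) : ⋃ i, s i ∈ f ∨ (⋃ i, s i)ᶜ ∈ f := by
  by_cases h : ∃ i, s i ∈ f
  · obtain ⟨i, hi⟩ := h
    exact .inl (mem_of_superset hi (subset_iUnion s i))
  · push Not at h
    exact .inr (compl_iUnion s ▸ iInter_mem.2 fun i => (hs i).resolve_left (h i))

end Filter

theorem Set.OrdConnected.mem_or_compl_mem_nhdsGT {α : Type*} [LinearOrder α]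
    [TopologicalSpace α] [OrderTopology α] [NoMaxOrder α] {J : Set α} (hJ : J.OrdConnected)
    (a : α) : J ∈ 𝓝[>] a ∨ Jᶜ ∈ 𝓝[>] a := by
  by_cases h : ∃ c, a < c ∧ Ioo a c ⊆ Jᶜ
  · obtain ⟨c, hac, hc⟩ := h
    exact .inr (mem_of_superset (Ioo_mem_nhdsGT hac) hc)
  push Not at h
  obtain ⟨c, hac⟩ := exists_gt a
  obtain ⟨x, hx, hxJ⟩ := not_subset.1 (h c hac)
  -- `J` meets every `(a, z)`, so by convexity it fills `(a, x)`.
  refine .inl (mem_of_superset (Ioo_mem_nhdsGT hx.1) fun z hz => ?_)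
  obtain ⟨y, hy, hyJ⟩ := not_subset.1 (h z hz.1)
  exact hJ.out (not_not.1 hyJ) (not_not.1 hxJ) ⟨hy.2.le, hz.2.le⟩

namespace FirstOrder.Language

variable {L : Language} {M N : Type*} [L.Structure M] [L.Structure N]

theorem definable_Ioo [L.IsOrdered] [Preorder N] [L.OrderedStructure N] {A : Set N} {u w : N}
    (hu : u ∈ A) (hw : w ∈ A) : A.Definable L {f : Fin 1 → N | f 0 ∈ Ioo u w} := by
  rw [Set.definable_iff_exists_formula_sum]
  refine ⟨(Term.var (Sum.inl (Sum.inl ⟨u, hu⟩))).lt (Term.var (Sum.inl (Sum.inr 0))) ⊓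
    (Term.var (Sum.inl (Sum.inr 0))).lt (Term.var (Sum.inl (Sum.inl ⟨w, hw⟩))), ?_⟩
  ext f
  simp [Formula.Realize]

namespace ElementaryEmbedding

variable (ι : M ↪ₑ[L] N) {α : Type*}

theorem definable_preimage_comp {s : Set (α → N)} (hs : (range ι).Definable L s) :
    (univ : Set M).Definable L ((ι ∘ ·) ⁻¹' s) := by
  obtain ⟨φ, rfl⟩ := Set.definable_iff_exists_formula_sum.1 hs
  refine Set.definable_iff_exists_formula_sum.2
    ⟨φ.relabel (Sum.map (fun p => ⟨rangeSplitting ι p, mem_univ _⟩) id), ?_⟩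
  ext x
  have hval : Sum.elim Subtype.val (ι ∘ x) =
      ι ∘ (Sum.elim Subtype.val x ∘ Sum.map (fun p => ⟨rangeSplitting ι p, mem_univ _⟩) id) := by
    ext (p | i) <;> simp [apply_rangeSplitting]
  simp only [mem_preimage, mem_ofPred_eq, Formula.realize_relabel, hval, ι.map_formula]

theorem eq_univ_of_forall_comp_mem [Finite α] {s : Set (α → N)} (hs : (range ι).Definable L s)
    (h : ∀ x : α → M, ι ∘ x ∈ s) : s = univ := by
  obtain ⟨φ, rfl⟩ := Set.definable_iff_exists_formula_sum.1 hs
  have hval : ∀ y : α → N, Sum.elim Subtype.val y = Sum.elim (ι ∘ rangeSplitting ι) y := by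
    intro y; ext (p | i) <;> simp
  have hM : (φ.iAlls α).Realize (rangeSplitting ι) := by
    rw [Formula.realize_iAlls]
    intro x
    have := h x
    rwa [mem_ofPred_eq, hval, ← Sum.comp_elim, ι.map_formula] at this
  have hN := (ι.map_formula _ _).2 hM
  rw [Formula.realize_iAlls] at hN
  exact eq_univ_of_forall fun y => by rw [mem_ofPred_eq, hval]; exact hN y

theorem Ioo_subset_of_Ioo_subset_preimage [L.IsOrdered] [LinearOrder M] [L.OrderedStructure M]
    [PartialOrder N] [L.OrderedStructure N] {s : Set N}
    (hs : (range ι).Definable L {f : Fin 1 → N | f 0 ∈ s}) {u w : M}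
    (h : Ioo u w ⊆ ι ⁻¹' s) : Ioo (ι u) (ι w) ⊆ s := by
  intro y hy
  have hmono := HomClass.strictMono (L := L) ι
  have hIoo_imp := ι.eq_univ_of_forall_comp_mem
    ((definable_Ioo (mem_range_self u) (mem_range_self w)).compl.union hs) fun x => by
      by_cases hx : x 0 ∈ Ioo u w
      · exact .inr (h hx)
      · exact .inl fun hιx => hx ⟨hmono.lt_iff_lt.1 hιx.1, hmono.lt_iff_lt.1 hιx.2⟩
  have hy' : (fun _ => y : Fin 1 → N) ∈ _ := hIoo_imp ▸ mem_univ _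
  exact hy'.resolve_left (not_not.2 hy)

theorem denselyOrdered [L.IsOrdered] [Preorder M] [L.OrderedStructure M] [Preorder N]
    [L.OrderedStructure N] [DenselyOrdered M] (ι : M ↪ₑ[L] N) : DenselyOrdered N :=
  realize_denselyOrdered_iff.1 ((ι.map_sentence _).1 realize_denselyOrdered)

end ElementaryEmbedding

end FirstOrder.Language

namespace Paper

theorem IsDiscrete.not_Ioo_subset {X : Type*} [LinearOrder X] [TopologicalSpace X]
    [OrderTopology X] [DenselyOrdered X] {s : Set X} (hs : IsDiscrete s) {l r : X} (hlr : l < r) :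
    ¬ Ioo l r ⊆ s := by
  intro hsub
  obtain ⟨x, hx⟩ := nonempty_Ioo.2 hlr
  obtain ⟨U, hU, hxU, hUs⟩ := hs x (hsub hx)
  have hx_isolated : {x} ∈ 𝓝 x := by
    refine mem_of_superset (inter_mem (hU.mem_nhds hxU) (isOpen_Ioo.mem_nhds hx)) ?_
    exact hUs ▸ inter_subset_inter_right U hsub
  have := nhdsLT_neBot_of_exists_lt ⟨l, hx.1⟩
  have hx_left : {x} ∩ Iio x ∈ 𝓝[<] x :=
    inter_mem (mem_nhdsWithin_of_mem_nhds hx_isolated) self_mem_nhdsWithin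
  obtain ⟨y, rfl, hyx⟩ := Filter.nonempty_of_mem hx_left
  exact lt_irrefl y hyx

section RightGerms

variable {α : Type*} [LinearOrder α] [TopologicalSpace α] [OrderTopology α]

theorem IsOInterval.isOpen_s12 {I : Set α} (hI : IsOInterval I) : IsOpen I := by
  rcases hI with ⟨p, q, rfl⟩ | ⟨p, rfl⟩ | ⟨q, rfl⟩ | rfl
  exacts [isOpen_Ioo, isOpen_Ioi, isOpen_Iio, isOpen_univ]

variable [NoMaxOrder α]

theorem FinUnionPtsIntervals.mem_or_compl_mem_nhdsGT {X : Set α} (hX : FinUnionPtsIntervals X)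
    (a : α) : X ∈ 𝓝[>] a ∨ Xᶜ ∈ 𝓝[>] a := by
  obtain ⟨F, n, J, hJ, rfl⟩ := hX
  refine mem_or_compl_mem_union ?_ (mem_or_compl_mem_iUnion fun i => ?_)
  · rw [← iUnion_of_singleton_coe (F : Set α)]
    exact mem_or_compl_mem_iUnion fun p => ordConnected_singleton.mem_or_compl_mem_nhdsGT a
  · rcases hJ i with ⟨p, q, hi⟩ | ⟨p, hi⟩ | ⟨q, hi⟩ | hi <;> rw [hi]
    all_goals exact OrdConnected.mem_or_compl_mem_nhdsGT inferInstance a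

theorem LocallyOMinimal.mem_or_compl_mem_nhdsGT {L : FirstOrder.Language} [L.Structure α]
    (hlo : LocallyOMinimal L α) {X : Set α} (hX : Def1 L α X) (a : α) :
    X ∈ 𝓝[>] a ∨ Xᶜ ∈ 𝓝[>] a := by
  obtain ⟨I, hI, haI, hXI⟩ := hlo X hX a
  have hI_nhds : I ∈ 𝓝[>] a := mem_nhdsWithin_of_mem_nhds (hI.isOpen_s12.mem_nhds haI)
  rcases hXI.mem_or_compl_mem_nhdsGT a with h | h
  · exact .inl (mem_of_superset h inter_subset_left)
  · exact .inr (mem_of_superset (inter_mem h hI_nhds) fun x ⟨hx, hxI⟩ hxX => hx ⟨hxX, hxI⟩)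

end RightGerms

end Paper

open Paper

theorem not_mem_discl_of_right_infinitesimal_general
    {L : FirstOrder.Language} {M : Type*} {N : Type*} [L.IsOrdered]
    [LinearOrder M] [L.Structure M] [L.OrderedStructure M]
    [DenselyOrdered M] [NoMaxOrder M]
    [TopologicalSpace M] [OrderTopology M]
    [LinearOrder N] [L.Structure N] [L.OrderedStructure N]
    [TopologicalSpace N] [OrderTopology N]
    (hlo : LocallyOMinimal L M)
    (ι : M ↪ₑ[L] N) (a : M) (b : N)
    (hab : ι a < b) (hinf : ∀ t : M, a < t → b < ι t) :
    b ∉ discl L N (Set.range ι) := by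
  rintro ⟨s, hs, hs_discrete, -, hbs⟩
  have := ι.denselyOrdered
  have hX : Def1 L M (ι ⁻¹' s) := ι.definable_preimage_comp hs
  rcases hlo.mem_or_compl_mem_nhdsGT hX a with h | h <;>
    obtain ⟨c, hac, hc⟩ := mem_nhdsGT_iff_exists_Ioo_subset.1 h
  · exact hs_discrete.not_Ioo_subset (hab.trans (hinf c hac))
      (ι.Ioo_subset_of_Ioo_subset_preimage hs hc)
  · exact ι.Ioo_subset_of_Ioo_subset_preimage (s := sᶜ) hs.compl hc ⟨hab, hinf c hac⟩ hbs

/-- Let `N` be an elementary extension of a definably complete locally o-minimal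
structure `M`. If `a ∈ M` and `b ∈ N` satisfy `a < b` and `b < t` for every `t ∈ M` with
`t > a`, then `b` lies in no discrete closed subset of `N` definable with parameters
from `M`; that is, `b ∉ discl_N(M)`. -/
theorem not_mem_discl_of_right_infinitesimal
    {L : FirstOrder.Language} {M : Type*} {N : Type*} [L.IsOrdered]
    [LinearOrder M] [L.Structure M] [L.OrderedStructure M]
    [DenselyOrdered M] [NoMaxOrder M] [NoMinOrder M]
    [TopologicalSpace M] [OrderTopology M]
    [LinearOrder N] [L.Structure N] [L.OrderedStructure N]
    [TopologicalSpace N] [OrderTopology N]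
    (hlo : LocallyOMinimal L M) (hdc : DefinablyComplete L M)
    (ι : M ↪ₑ[L] N) (a : M) (b : N)
    (hab : ι a < b) (hinf : ∀ t : M, a < t → b < ι t) :
    b ∉ discl L N (Set.range ι) :=
  not_mem_discl_of_right_infinitesimal_general hlo ι a b hab hinf
end
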